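/- Let d ≥ 2, let P be a d×d symmetric positive definite matrix with eigenvalues σ_1 ≥ ⋯ ≥ σ_d > 0 and orthonormal eigenvectors u_1,…,u_d, let g be a nonzero vector in span{u_1,u_2}, let α ∈ (−1/d, 0], g̃ = g/√(gᵀPg), and P' = (d²(1−α²)/(d²−1))(P − (2(1+dα)/((d+1)(1+α))) P g̃ g̃ᵀ P). Let σ^{new}_1 ≥ ⋯ ≥ σ^{new}_d be the ordered eigenvalues of P', and set D = σ_2/σ_d, D' = σ^{new}_2/σ^{new}_d. Then D' ≤ ((d+1)(1+α)/((d−1)(1−α))) · D, and if D > (d+1)(1+α)/((d−1)(1−α)) then D' ≤ D. -/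
import Mathlib

open Matrix

lemma vmv_mulVec (d : ℕ) (a b x : Fin d → ℝ) : vecMulVec a b *ᵥ x = (b ⬝ᵥ x) • a := by
  ext i
  show ∑ j, a i * b j * x j = (∑ j, b j * x j) * a i
  rw [Finset.sum_mul]
  exact Finset.sum_congr rfl fun j _ => by ring

lemma sum_mulVec' {d : ℕ} (M : Fin d → Matrix (Fin d) (Fin d) ℝ) (y : Fin d → ℝ) :
    (∑ i, M i) *ᵥ y = ∑ i, M i *ᵥ y := by
  ext j
  simp only [mulVec, dotProduct, Finset.sum_apply, Matrix.sum_apply, Finset.sum_mul]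
  rw [Finset.sum_comm]

lemma dot_sum' {d : ℕ} (x : Fin d → ℝ) (v : Fin d → Fin d → ℝ) :
    x ⬝ᵥ (∑ k, v k) = ∑ k, x ⬝ᵥ v k := by
  simp only [dotProduct, Finset.sum_apply, Finset.mul_sum]
  rw [Finset.sum_comm]

lemma bilin (d : ℕ) (σ : Fin d → ℝ) (u : Fin d → Fin d → ℝ) (x y : Fin d → ℝ) :
    x ⬝ᵥ ((∑ i, σ i • vecMulVec (u i) (u i)) *ᵥ y)
      = ∑ i, σ i * ((u i ⬝ᵥ x) * (u i ⬝ᵥ y)) := by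
  rw [sum_mulVec']
  simp only [smul_mulVec, vmv_mulVec]
  rw [dot_sum']
  refine Finset.sum_congr rfl fun i _ => ?_
  rw [dotProduct_smul, dotProduct_smul, dotProduct_comm x (u i)]
  simp only [smul_eq_mul]; ring

lemma parseval (d : ℕ) (u : Fin d → Fin d → ℝ)
    (horth : ∀ i j, u i ⬝ᵥ u j = if i = j then (1 : ℝ) else 0) (x : Fin d → ℝ) :
    ∑ i, (u i ⬝ᵥ x)^2 = x ⬝ᵥ x := by
  have hU : (Matrix.of u) * (Matrix.of u)ᵀ = 1 := by
    ext i j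
    simpa [Matrix.mul_apply, dotProduct, Matrix.one_apply] using horth i j
  have hU' : (Matrix.of u)ᵀ * (Matrix.of u) = 1 := mul_eq_one_comm.mp hU
  have h1 : (Matrix.of u *ᵥ x) ⬝ᵥ (Matrix.of u *ᵥ x) = x ⬝ᵥ x := by
    rw [Matrix.dotProduct_mulVec, ← Matrix.vecMul_transpose, Matrix.vecMul_vecMul, hU']
    simp
  rw [← h1]
  simp [dotProduct, Matrix.mulVec, sq]

lemma sum_one' {d : ℕ} (i0 : Fin d) (f : Fin d → ℝ) (hf : ∀ i, i ≠ i0 → f i = 0) :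
    ∑ i, f i = f i0 :=
  Finset.sum_eq_single i0 (fun b _ hb => hf b hb) (fun h => absurd (Finset.mem_univ i0) h)

lemma sum_two' {d : ℕ} (i0 i1 : Fin d) (h01 : i0 ≠ i1) (f : Fin d → ℝ)
    (hf : ∀ i, i ≠ i0 → i ≠ i1 → f i = 0) : ∑ i, f i = f i0 + f i1 := by
  classical
  have key : ∀ i ∈ Finset.univ, f i
      = (if i = i0 then f i0 else 0) + (if i = i1 then f i1 else 0) := by
    intro i _
    by_cases h0 : i = i0
    · subst h0; simp [h01]
    · by_cases h1 : i = i1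
      · subst h1; simp [h0]
      · simp [h0, h1, hf i h0 h1]
  rw [Finset.sum_congr rfl key, Finset.sum_add_distrib]
  simp

set_option maxHeartbeats 1600000 in
/-- Evolution of the eigenvalue ratio `D = σ₂/σ_d` under the shallow-cut
ellipsoid update of depth `α ∈ (-1/d, 0]`. `σ'` denotes the ordered
(decreasing) eigenvalues of `P'`. -/
theorem stmt12 (d : ℕ) (hd : 2 ≤ d)
    (P : Matrix (Fin d) (Fin d) ℝ)
    (σ : Fin d → ℝ) (u : Fin d → Fin d → ℝ)
    (horth : ∀ i j, u i ⬝ᵥ u j = if i = j then (1 : ℝ) else 0)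
    (hdecr : ∀ i j : Fin d, i ≤ j → σ j ≤ σ i)
    (hpos : ∀ i, 0 < σ i)
    (hP : P = ∑ i, σ i • vecMulVec (u i) (u i))
    (g : Fin d → ℝ) (hg : g ≠ 0)
    (hspan : ∃ a b : ℝ, g = a • u ⟨0, by omega⟩ + b • u ⟨1, by omega⟩)
    (α : ℝ) (hα₁ : -(1 / (d : ℝ)) < α) (hα₂ : α ≤ 0)
    (gt : Fin d → ℝ) (hgt : gt = (Real.sqrt (g ⬝ᵥ (P *ᵥ g)))⁻¹ • g)
    (P' : Matrix (Fin d) (Fin d) ℝ)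
    (hP' : P' = ((d : ℝ)^2 * (1 - α^2) / ((d : ℝ)^2 - 1)) •
      (P - (2 * (1 + (d : ℝ) * α) / (((d : ℝ) + 1) * (1 + α))) •
        (P * vecMulVec gt gt * P)))
    (σ' : Fin d → ℝ) (u' : Fin d → Fin d → ℝ)
    (horth' : ∀ i j, u' i ⬝ᵥ u' j = if i = j then (1 : ℝ) else 0)
    (hdecr' : ∀ i j : Fin d, i ≤ j → σ' j ≤ σ' i)
    (hP'decomp : P' = ∑ i, σ' i • vecMulVec (u' i) (u' i)) :
    σ' ⟨1, by omega⟩ / σ' ⟨d - 1, by omega⟩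
      ≤ (((d : ℝ) + 1) * (1 + α) / (((d : ℝ) - 1) * (1 - α)))
          * (σ ⟨1, by omega⟩ / σ ⟨d - 1, by omega⟩) ∧
    (σ ⟨1, by omega⟩ / σ ⟨d - 1, by omega⟩
        > ((d : ℝ) + 1) * (1 + α) / (((d : ℝ) - 1) * (1 - α)) →
      σ' ⟨1, by omega⟩ / σ' ⟨d - 1, by omega⟩
        ≤ σ ⟨1, by omega⟩ / σ ⟨d - 1, by omega⟩) := by
  classical
  set c : ℝ := (d : ℝ)^2 * (1 - α^2) / ((d : ℝ)^2 - 1) with hcdef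
  set β : ℝ := 2 * (1 + (d : ℝ) * α) / (((d : ℝ) + 1) * (1 + α)) with hβdef
  have h0d : 0 < d := by omega
  set i0 : Fin d := ⟨0, by omega⟩ with hi0def
  set i1 : Fin d := ⟨1, by omega⟩ with hi1def
  set il : Fin d := ⟨d - 1, by omega⟩ with hildef
  -- index facts
  have hi01 : i0 ≠ i1 := by
    intro h; have := congrArg Fin.val h; simp [hi0def, hi1def] at this
  have h01le : i0 ≤ i1 := by simp [hi0def, hi1def, Fin.mk_le_mk]
  have h1l : i1 ≤ il := by simp [hi1def, hildef, Fin.mk_le_mk]; omega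
  have hil : ∀ i : Fin d, i ≤ il := by
    intro i; rw [Fin.le_def]; simp [hildef]; omega
  have hne1 : ∀ i : Fin d, i ≠ i0 → i1 ≤ i := by
    intro i h; rw [Fin.le_def]
    have : i.val ≠ 0 := fun hv => h (Fin.ext (by simp [hi0def, hv]))
    simp [hi1def]; omega
  clear_value i0 i1 il
  -- scalar facts
  have hdR : (2 : ℝ) ≤ (d : ℝ) := by exact_mod_cast hd
  have hd0 : (0 : ℝ) < d := by linarith
  have hinv : 1 / (d : ℝ) ≤ 1 / 2 := by
    apply one_div_le_one_div_of_le <;> linarith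
  have h1pα : 0 < 1 + α := by
    have := hα₁; nlinarith
  have hdα : 0 < 1 + (d : ℝ) * α := by
    have h' : (d : ℝ) * (-(1 / d)) = -1 := by field_simp
    nlinarith [mul_lt_mul_of_pos_left hα₁ hd0]
  have h1mα : 0 < 1 - α := by linarith
  have hαsq : α^2 < 1 := by nlinarith
  have hc : 0 < c := by
    rw [hcdef]
    apply div_pos
    · have h1 : (0:ℝ) < 1 - α^2 := by linarith
      have h2 : (0:ℝ) < (d:ℝ)^2 := by positivity
      exact mul_pos h2 h1
    · nlinarith
  have hden : 0 < ((d : ℝ) + 1) * (1 + α) := by nlinarith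
  have hden2 : 0 < ((d : ℝ) - 1) * (1 - α) := by nlinarith
  have hβ0 : 0 ≤ β := by
    rw [hβdef]; positivity
  have hfac : (1 - β) * (((d : ℝ) + 1) * (1 + α)) = ((d : ℝ) - 1) * (1 - α) := by
    rw [hβdef]; field_simp; ring
  have he : 0 < 1 - β := by nlinarith
  clear_value c β
  -- coefficients of g
  obtain ⟨a, b, hab⟩ := hspan
  have hug : ∀ i, u i ⬝ᵥ g = a * (u i ⬝ᵥ u i0) + b * (u i ⬝ᵥ u i1) := by
    intro i
    rw [hab]
    simp [dotProduct_add, dotProduct_smul, smul_eq_mul, hi0def, hi1def]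
  have hgi0 : u i0 ⬝ᵥ g = a := by
    rw [hug, horth i0 i0, horth i0 i1, if_pos rfl, if_neg hi01]; ring
  have hgi1 : u i1 ⬝ᵥ g = b := by
    rw [hug, horth i1 i0, horth i1 i1, if_pos rfl, if_neg (Ne.symm hi01)]; ring
  have hgoth : ∀ i, i ≠ i0 → i ≠ i1 → u i ⬝ᵥ g = 0 := by
    intro i h0 h1
    rw [hug, horth i i0, horth i i1, if_neg h0, if_neg h1]; ring
  set N : ℝ := g ⬝ᵥ (P *ᵥ g) with hNdef
  clear_value N
  have hbilinP : ∀ x y : Fin d → ℝ,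
      x ⬝ᵥ (P *ᵥ y) = ∑ i, σ i * ((u i ⬝ᵥ x) * (u i ⬝ᵥ y)) := by
    intro x y; rw [hP]; exact bilin d σ u x y
  have hN : N = σ i0 * a^2 + σ i1 * b^2 := by
    have h2 : ∑ i, σ i * ((u i ⬝ᵥ g) * (u i ⬝ᵥ g)) = σ i0 * a^2 + σ i1 * b^2 := by
      rw [sum_two' i0 i1 hi01 (fun i => σ i * ((u i ⬝ᵥ g) * (u i ⬝ᵥ g)))
        (fun i h0 h1 => by
          show σ i * (u i ⬝ᵥ g * u i ⬝ᵥ g) = 0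
          rw [hgoth i h0 h1]; ring)]
      rw [hgi0, hgi1]; ring
    rw [hNdef, hbilinP, h2]
  have hab0 : a ≠ 0 ∨ b ≠ 0 := by
    by_contra h
    push_neg at h
    exact hg (by rw [hab, h.1, h.2]; simp)
  have hNpos : 0 < N := by
    rw [hN]
    rcases hab0 with h | h
    · have ha2 : 0 < a^2 := by positivity
      nlinarith [hpos i0, hpos i1, sq_nonneg b, mul_pos (hpos i0) ha2]
    · have hb2 : 0 < b^2 := by positivity
      nlinarith [hpos i0, hpos i1, sq_nonneg a, mul_pos (hpos i1) hb2]
  set s : ℝ := (Real.sqrt N)⁻¹ with hsdef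
  have hs2 : s^2 * N = 1 := by
    rw [hsdef, inv_pow, Real.sq_sqrt hNpos.le]
    exact inv_mul_cancel₀ hNpos.ne'
  have hwt : ∀ i, u i ⬝ᵥ gt = s * (u i ⬝ᵥ g) := by
    intro i
    rw [hgt, dotProduct_smul, smul_eq_mul]
  have hwt0 : u i0 ⬝ᵥ gt = s * a := by rw [hwt, hgi0]
  have hwt1 : u i1 ⬝ᵥ gt = s * b := by rw [hwt, hgi1]
  have hwtoth : ∀ i, i ≠ i0 → i ≠ i1 → u i ⬝ᵥ gt = 0 := by
    intro i h0 h1; rw [hwt, hgoth i h0 h1, mul_zero]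
  have hnorm : σ i0 * (s*a)^2 + σ i1 * (s*b)^2 = 1 := by
    linear_combination hs2 - s^2 * hN
  -- quadratic form of P'
  have hbilinP' : ∀ x y : Fin d → ℝ,
      x ⬝ᵥ (P' *ᵥ y) = ∑ i, σ' i * ((u' i ⬝ᵥ x) * (u' i ⬝ᵥ y)) := by
    intro x y; rw [hP'decomp]; exact bilin d σ' u' x y
  have hVP : ∀ x : Fin d → ℝ,
      (P * vecMulVec gt gt * P) *ᵥ x = (gt ⬝ᵥ (P *ᵥ x)) • (P *ᵥ gt) := by
    intro x
    rw [← Matrix.mulVec_mulVec, ← Matrix.mulVec_mulVec, vmv_mulVec, Matrix.mulVec_smul]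
  have hquad : ∀ x : Fin d → ℝ, x ⬝ᵥ (P' *ᵥ x)
      = c * ((∑ i, σ i * (u i ⬝ᵥ x)^2)
          - β * (∑ i, σ i * ((u i ⬝ᵥ gt) * (u i ⬝ᵥ x)))^2) := by
    intro x
    rw [hP', smul_mulVec, sub_mulVec, smul_mulVec, hVP]
    rw [dotProduct_smul, dotProduct_sub, dotProduct_smul, dotProduct_smul]
    rw [hbilinP x x, hbilinP gt x, hbilinP x gt]
    have e1 : (∑ i, σ i * ((u i ⬝ᵥ x) * (u i ⬝ᵥ gt)))
        = ∑ i, σ i * ((u i ⬝ᵥ gt) * (u i ⬝ᵥ x)) :=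
      Finset.sum_congr rfl fun i _ => by ring
    have e2 : (∑ i, σ i * ((u i ⬝ᵥ x) * (u i ⬝ᵥ x)))
        = ∑ i, σ i * (u i ⬝ᵥ x)^2 :=
      Finset.sum_congr rfl fun i _ => by ring
    rw [e1, e2]
    simp only [smul_eq_mul]
    ring
  -- reduction of the cross sum to two terms
  have hS : ∀ x : Fin d → ℝ, (∑ i, σ i * ((u i ⬝ᵥ gt) * (u i ⬝ᵥ x)))
      = σ i0 * ((s*a) * (u i0 ⬝ᵥ x)) + σ i1 * ((s*b) * (u i1 ⬝ᵥ x)) := by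
    intro x
    rw [sum_two' i0 i1 hi01 (fun i => σ i * ((u i ⬝ᵥ gt) * (u i ⬝ᵥ x)))
      (fun i h0 h1 => by
        show σ i * (u i ⬝ᵥ gt * (u i ⬝ᵥ x)) = 0
        rw [hwtoth i h0 h1]; ring)]
    show σ i0 * (u i0 ⬝ᵥ gt * (u i0 ⬝ᵥ x)) + σ i1 * (u i1 ⬝ᵥ gt * (u i1 ⬝ᵥ x)) = _
    rw [hwt0, hwt1]
  set m : ℝ := min ((1-β) * σ i1) (σ il) with hmdef
  have hm : 0 < m := lt_min (mul_pos he (hpos i1)) (hpos il)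
  -- lower bound for the quadratic form of P'
  have hlow : ∀ x : Fin d → ℝ, c * (m * (x ⬝ᵥ x)) ≤ x ⬝ᵥ (P' *ᵥ x) := by
    intro x
    rw [hquad x, hS x]
    have hCS : (σ i0 * ((s*a) * (u i0 ⬝ᵥ x)) + σ i1 * ((s*b) * (u i1 ⬝ᵥ x)))^2
        ≤ σ i0 * (u i0 ⬝ᵥ x)^2 + σ i1 * (u i1 ⬝ᵥ x)^2 := by
      have expand : (σ i0 * ((s*a) * (u i0 ⬝ᵥ x)) + σ i1 * ((s*b) * (u i1 ⬝ᵥ x)))^2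
          = (σ i0 * (s*a)^2 + σ i1 * (s*b)^2)
              * (σ i0 * (u i0 ⬝ᵥ x)^2 + σ i1 * (u i1 ⬝ᵥ x)^2)
            - σ i0 * σ i1 * ((s*a) * (u i1 ⬝ᵥ x) - (s*b) * (u i0 ⬝ᵥ x))^2 := by ring
      rw [expand, hnorm, one_mul]
      have hnn := mul_nonneg (mul_pos (hpos i0) (hpos i1)).le
        (sq_nonneg ((s*a) * (u i1 ⬝ᵥ x) - (s*b) * (u i0 ⬝ᵥ x)))
      linarith
    have hq : ∑ i, (if i = i0 then β * σ i0 * (u i0 ⬝ᵥ x)^2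
          else if i = i1 then β * σ i1 * (u i1 ⬝ᵥ x)^2 else 0)
        = β * σ i0 * (u i0 ⬝ᵥ x)^2 + β * σ i1 * (u i1 ⬝ᵥ x)^2 := by
      rw [sum_two' i0 i1 hi01 _ (fun i h0 h1 => by simp [h0, h1])]
      simp [hi01, Ne.symm hi01]
    have hterm : ∀ i ∈ Finset.univ, m * (u i ⬝ᵥ x)^2
          + (if i = i0 then β * σ i0 * (u i0 ⬝ᵥ x)^2
              else if i = i1 then β * σ i1 * (u i1 ⬝ᵥ x)^2 else 0)
        ≤ σ i * (u i ⬝ᵥ x)^2 := by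
      intro i _
      by_cases h0 : i = i0
      · subst h0
        rw [if_pos rfl]
        have hm1 : m ≤ (1-β) * σ i1 := min_le_left _ _
        have h2 : σ i1 ≤ σ i := hdecr _ _ h01le
        have h3 : (1-β) * σ i1 ≤ (1-β) * σ i := mul_le_mul_of_nonneg_left h2 he.le
        have hcoef : m + β * σ i ≤ σ i := by linarith
        have h4 := mul_le_mul_of_nonneg_right hcoef (sq_nonneg (u i ⬝ᵥ x))
        linarith
      · by_cases h1 : i = i1
        · subst h1
          rw [if_neg h0, if_pos rfl]
          have hm1 : m ≤ (1-β) * σ i := min_le_left _ _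
          have hcoef : m + β * σ i ≤ σ i := by linarith
          have h4 := mul_le_mul_of_nonneg_right hcoef (sq_nonneg (u i ⬝ᵥ x))
          linarith
        · rw [if_neg h0, if_neg h1, add_zero]
          have hmi : m ≤ σ i := le_trans (min_le_right _ _) (hdecr i il (hil i))
          exact mul_le_mul_of_nonneg_right hmi (sq_nonneg _)
    have hsum := Finset.sum_le_sum hterm
    rw [Finset.sum_add_distrib, hq, ← Finset.mul_sum, parseval d u horth x] at hsum
    have hβCS := mul_le_mul_of_nonneg_left hCS hβ0
    have hfinal : m * (x ⬝ᵥ x)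
        ≤ (∑ i, σ i * (u i ⬝ᵥ x)^2)
          - β * (σ i0 * ((s*a) * (u i0 ⬝ᵥ x)) + σ i1 * ((s*b) * (u i1 ⬝ᵥ x)))^2 := by
      linarith [hβCS, hsum]
    exact mul_le_mul_of_nonneg_left hfinal hc.le
  -- upper bound on the subspace orthogonal to u i0
  have hupp : ∀ x : Fin d → ℝ, u i0 ⬝ᵥ x = 0 →
      x ⬝ᵥ (P' *ᵥ x) ≤ c * (σ i1 * (x ⬝ᵥ x)) := by
    intro x hx0
    rw [hquad x]
    have hA : ∑ i, σ i * (u i ⬝ᵥ x)^2 ≤ σ i1 * (x ⬝ᵥ x) := by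
      rw [← parseval d u horth x, Finset.mul_sum]
      apply Finset.sum_le_sum
      intro i _
      by_cases h0 : i = i0
      · subst h0
        rw [hx0]
        simp
      · exact mul_le_mul_of_nonneg_right (hdecr i1 i (hne1 i h0)) (sq_nonneg _)
    have hS2 : 0 ≤ β * (∑ i, σ i * ((u i ⬝ᵥ gt) * (u i ⬝ᵥ x)))^2 :=
      mul_nonneg hβ0 (sq_nonneg _)
    exact mul_le_mul_of_nonneg_left (by linarith) hc.le
  -- bound for the smallest new eigenvalue
  have hl' : c * m ≤ σ' il := by
    have h := hlow (u' il)
    have hself : u' il ⬝ᵥ u' il = 1 := by rw [horth']; simp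
    have hval : u' il ⬝ᵥ (P' *ᵥ u' il) = σ' il := by
      rw [hbilinP' (u' il) (u' il),
        sum_one' il _ (fun i hi => by
          show σ' i * (u' i ⬝ᵥ u' il * (u' i ⬝ᵥ u' il)) = 0
          rw [horth' i il, if_neg hi]; ring)]
      show σ' il * (u' il ⬝ᵥ u' il * (u' il ⬝ᵥ u' il)) = σ' il
      rw [hself]; ring
    rw [hval, hself, mul_one] at h
    exact h
  -- bound for the second largest new eigenvalue
  have h1' : σ' i1 ≤ c * σ i1 := by
    obtain ⟨A, B, hAB0, hABpos⟩ : ∃ A B : ℝ,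
        A * (u' i0 ⬝ᵥ u i0) + B * (u' i1 ⬝ᵥ u i0) = 0 ∧ 0 < A^2 + B^2 := by
      by_cases h : u' i0 ⬝ᵥ u i0 = 0 ∧ u' i1 ⬝ᵥ u i0 = 0
      · exact ⟨1, 0, by rw [h.1, h.2]; ring, by norm_num⟩
      · refine ⟨u' i1 ⬝ᵥ u i0, -(u' i0 ⬝ᵥ u i0), by ring, ?_⟩
        rcases not_and_or.mp h with h' | h'
        · have hp : 0 < (u' i0 ⬝ᵥ u i0)^2 := by positivity
          nlinarith [sq_nonneg (u' i1 ⬝ᵥ u i0)]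
        · have hp : 0 < (u' i1 ⬝ᵥ u i0)^2 := by positivity
          nlinarith [sq_nonneg (u' i0 ⬝ᵥ u i0)]
    set w : Fin d → ℝ := A • u' i0 + B • u' i1 with hwdef
    have hu'w : ∀ i, u' i ⬝ᵥ w = A * (u' i ⬝ᵥ u' i0) + B * (u' i ⬝ᵥ u' i1) := by
      intro i
      rw [hwdef]
      simp [dotProduct_add, dotProduct_smul, smul_eq_mul]
    have hu'w0 : u' i0 ⬝ᵥ w = A := by
      rw [hu'w, horth' i0 i0, horth' i0 i1, if_pos rfl, if_neg hi01]; ring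
    have hu'w1 : u' i1 ⬝ᵥ w = B := by
      rw [hu'w, horth' i1 i0, horth' i1 i1, if_pos rfl, if_neg (Ne.symm hi01)]; ring
    have hu'woth : ∀ i, i ≠ i0 → i ≠ i1 → u' i ⬝ᵥ w = 0 := by
      intro i h0 h1
      rw [hu'w, horth' i i0, horth' i i1, if_neg h0, if_neg h1]; ring
    have hworth : u i0 ⬝ᵥ w = 0 := by
      rw [hwdef]
      rw [show u i0 ⬝ᵥ (A • u' i0 + B • u' i1)
          = A * (u i0 ⬝ᵥ u' i0) + B * (u i0 ⬝ᵥ u' i1) by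
        simp [dotProduct_add, dotProduct_smul, smul_eq_mul]]
      rw [dotProduct_comm (u i0) (u' i0), dotProduct_comm (u i0) (u' i1)]
      exact hAB0
    have hww : w ⬝ᵥ w = A^2 + B^2 := by
      rw [← parseval d u' horth' w,
        sum_two' i0 i1 hi01 (fun i => (u' i ⬝ᵥ w)^2) (fun i h0 h1 => by
          show (u' i ⬝ᵥ w)^2 = 0
          rw [hu'woth i h0 h1]; ring)]
      show (u' i0 ⬝ᵥ w)^2 + (u' i1 ⬝ᵥ w)^2 = _
      rw [hu'w0, hu'w1]
    have hwP' : w ⬝ᵥ (P' *ᵥ w) = σ' i0 * A^2 + σ' i1 * B^2 := by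
      rw [hbilinP' w w,
        sum_two' i0 i1 hi01 _ (fun i h0 h1 => by
          show σ' i * (u' i ⬝ᵥ w * (u' i ⬝ᵥ w)) = 0
          rw [hu'woth i h0 h1]; ring)]
      show σ' i0 * (u' i0 ⬝ᵥ w * (u' i0 ⬝ᵥ w)) + σ' i1 * (u' i1 ⬝ᵥ w * (u' i1 ⬝ᵥ w)) = _
      rw [hu'w0, hu'w1]; ring
    have hlo : σ' i1 * (A^2 + B^2) ≤ w ⬝ᵥ (P' *ᵥ w) := by
      rw [hwP']
      have h4 := mul_le_mul_of_nonneg_right (hdecr' i0 i1 h01le) (sq_nonneg A)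
      linarith
    have hhi : w ⬝ᵥ (P' *ᵥ w) ≤ c * (σ i1 * (A^2 + B^2)) := by
      have h := hupp w hworth
      rwa [hww] at h
    have h2 : σ' i1 * (A^2 + B^2) ≤ (c * σ i1) * (A^2 + B^2) := by
      rw [mul_assoc]
      exact le_trans hlo hhi
    exact le_of_mul_le_mul_right h2 hABpos
  -- endgame arithmetic
  have hmge : (1-β) * σ il ≤ m :=
    le_min (mul_le_mul_of_nonneg_left (hdecr i1 il h1l) he.le)
      (by have := mul_nonneg hβ0 (hpos il).le; linarith)
  have hσ'l : 0 < σ' il := lt_of_lt_of_le (mul_pos hc hm) hl'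
  have hKe : (((d:ℝ)+1) * (1+α)) / (((d:ℝ)-1) * (1-α)) = (1-β)⁻¹ := by
    rw [inv_eq_one_div, div_eq_div_iff hden2.ne' he.ne']
    linear_combination hfac
  constructor
  · have hden' : c * ((1-β) * σ il) ≤ σ' il :=
      le_trans (mul_le_mul_of_nonneg_left hmge hc.le) hl'
    calc σ' i1 / σ' il ≤ (c * σ i1) / (c * ((1-β) * σ il)) :=
          div_le_div₀ (mul_pos hc (hpos i1)).le h1'
            (mul_pos hc (mul_pos he (hpos il))) hden'
      _ = σ i1 / ((1-β) * σ il) := mul_div_mul_left _ _ (ne_of_gt hc)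
      _ = (((d:ℝ)+1) * (1+α) / (((d:ℝ)-1) * (1-α))) * (σ i1 / σ il) := by
          rw [hKe]
          field_simp
  · intro hyp
    have h1x : (1-β)⁻¹ < σ i1 / σ il := by rw [← hKe]; exact hyp
    have h2x : (1-β)⁻¹ * σ il < σ i1 := by
      have h := mul_lt_mul_of_pos_right h1x (hpos il)
      rwa [div_mul_cancel₀ _ (ne_of_gt (hpos il))] at h
    have h3x : σ il < (1-β) * σ i1 := by
      have h := mul_lt_mul_of_pos_left h2x he
      rwa [← mul_assoc, mul_inv_cancel₀ he.ne', one_mul] at h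
    have hm' : m = σ il := min_eq_right h3x.le
    have hdenl : c * σ il ≤ σ' il := by rw [← hm']; exact hl'
    calc σ' i1 / σ' il ≤ (c * σ i1) / (c * σ il) :=
          div_le_div₀ (mul_pos hc (hpos i1)).le h1'
            (mul_pos hc (hpos il)) hdenl
      _ = σ i1 / σ il := mul_div_mul_left _ _ (ne_of_gt hc)
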